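/- arXiv:1111.0304 — 2 statements merged into one kernel-verified Lean document; each statement's English description precedes it below -/
import Mathlib

section
/- Let C be a smooth projective complex curve of genus g ≥ 2 and let L be a globally generated line bundle on C with deg L ≥ 2g + 1. Then the pair (C, L) is linearly stable: every complete linear subseries P ⊆ L with deg P = d' and h^0(P) − 1 = r' ≥ 1 arising from a generated line subbundle satisfies d'/r' > deg L/(h^0(L) − 1). -/
/-- Abstract numerical model of a smooth projective complex curve: the set of
(isomorphism classes of) line bundles together with degrees and the dimensions
`h⁰`, `h¹` of cohomology, satisfying the standard facts of the theory of
algebraic curves (Riemann–Roch, Serre duality, Clifford's theorem, and the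
basic properties of the gonality and the Clifford index). -/
structure CurveData where
  /-- isomorphism classes of line bundles on the curve -/
  Pic : Type
  genus : ℕ
  gonality : ℕ
  /-- the Clifford index of the curve -/
  cliff : ℤ
  deg : Pic → ℤ
  h0 : Pic → ℕ
  h1 : Pic → ℕ
  /-- the canonical bundle `ω_C` -/
  omega : Pic
  tensor : Pic → Pic → Pic
  /-- `effective D` : `D = O_C(E)` for an effective divisor `E` -/
  effective : Pic → Prop
  /-- globally generated (base point free) -/
  bpf : Pic → Prop
  /-- `subseries P L` : `P` is a proper sub-line bundle of `L`, generated by a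
  subspace of `H⁰(L)` -/
  subseries : Pic → Pic → Prop
  hyperelliptic : Prop
  genus_ge : 2 ≤ genus
  riemannRoch : ∀ A, (h0 A : ℤ) - (h1 A : ℤ) = deg A + 1 - (genus : ℤ)
  serre : ∀ A B, tensor A B = omega → h1 A = h0 B
  deg_omega : deg omega = 2 * (genus : ℤ) - 2
  h0_omega : h0 omega = genus
  h1_vanish : ∀ A, 2 * (genus : ℤ) - 2 < deg A → h1 A = 0
  clifford_thm : ∀ A, 1 ≤ h0 A → 1 ≤ h1 A → 2 * ((h0 A : ℤ) - 1) ≤ deg A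
  cliff_le : ∀ A, 2 ≤ h0 A → 2 ≤ h1 A → cliff ≤ deg A - 2 * ((h0 A : ℤ) - 1)
  cliff_nonneg : 0 ≤ cliff
  cliff_le_gon : cliff ≤ (gonality : ℤ) - 2
  gon_ge_two : 2 ≤ gonality
  gon_bound : ∀ A, bpf A → 2 ≤ h0 A → (gonality : ℤ) * ((h0 A : ℤ) - 1) ≤ deg A
  hyperelliptic_iff : hyperelliptic ↔ cliff = 0
  deg_tensor : ∀ A B, deg (tensor A B) = deg A + deg B
  effective_deg : ∀ D, effective D → 0 ≤ deg D
  subseries_deg_lt : ∀ P L, subseries P L → deg P < deg L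
  subseries_h1 : ∀ P L, subseries P L → h1 L ≤ h1 P

namespace CurveData

/-- Linear semistability of the complete linear series `|L|`: every complete
subseries `P` (with `h⁰(P) ≥ 2`) satisfies `deg P/(h⁰(P)-1) ≥ deg L/(h⁰(L)-1)`. -/
def LinSemistable (C : CurveData) (L : C.Pic) : Prop :=
  ∀ P, C.subseries P L → 2 ≤ C.h0 P →
    (C.deg L : ℚ) / ((C.h0 L : ℚ) - 1) ≤ (C.deg P : ℚ) / ((C.h0 P : ℚ) - 1)

/-- Linear stability of the complete linear series `|L|`. -/
def LinStable (C : CurveData) (L : C.Pic) : Prop :=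
  ∀ P, C.subseries P L → 2 ≤ C.h0 P →
    (C.deg L : ℚ) / ((C.h0 L : ℚ) - 1) < (C.deg P : ℚ) / ((C.h0 P : ℚ) - 1)

end CurveData

/-- Let `C` be a smooth projective complex curve of genus `g ≥ 2` and `L` a
globally generated line bundle with `deg L ≥ 2g + 1`.  Then `(C, L)` is
linearly stable: every complete subseries `P ⊆ L` arising from a generated
line subbundle, with `r' = h⁰(P) - 1 ≥ 1`, satisfies
`deg P / r' > deg L / (h⁰(L) - 1)`. -/
theorem linStable_of_deg_ge_two_g_add_one (C : CurveData) (L : C.Pic)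
    (hgg : C.bpf L) (hdeg : 2 * (C.genus : ℤ) + 1 ≤ C.deg L) :
    C.LinStable L := by
  intro P hPL h2
  have hg : (2:ℤ) ≤ (C.genus : ℤ) := by exact_mod_cast C.genus_ge
  have hL1 : C.h1 L = 0 := C.h1_vanish L (by linarith)
  have hRRL := C.riemannRoch L
  rw [hL1] at hRRL
  have hh0L : (C.h0 L : ℤ) = C.deg L + 1 - (C.genus : ℤ) := by push_cast at hRRL; linarith
  have hdP : C.deg P < C.deg L := C.subseries_deg_lt P L hPL
  have h2' : (2:ℤ) ≤ (C.h0 P : ℤ) := by exact_mod_cast h2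
  have hdenL : (0:ℚ) < (C.h0 L : ℚ) - 1 := by
    have : (2:ℤ) ≤ (C.h0 L : ℤ) := by linarith
    have : (2:ℚ) ≤ (C.h0 L : ℚ) := by exact_mod_cast this
    linarith
  have hdenP : (0:ℚ) < (C.h0 P : ℚ) - 1 := by
    have : (2:ℚ) ≤ (C.h0 P : ℚ) := by exact_mod_cast h2
    linarith
  rw [div_lt_div_iff₀ hdenL hdenP]
  have key : C.deg L * ((C.h0 P : ℤ) - 1) < C.deg P * ((C.h0 L : ℤ) - 1) := by
    by_cases hP1 : C.h1 P = 0
    · have hRRP := C.riemannRoch P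
      rw [hP1] at hRRP
      have hh0P : (C.h0 P : ℤ) = C.deg P + 1 - (C.genus : ℤ) := by push_cast at hRRP; linarith
      nlinarith [mul_lt_mul_of_pos_left hdP (show (0:ℤ) < (C.genus : ℤ) by linarith)]
    · have hP1' : 1 ≤ C.h1 P := Nat.one_le_iff_ne_zero.mpr hP1
      have hcl := C.clifford_thm P (by omega) hP1'
      nlinarith [mul_le_mul_of_nonneg_right hcl (show (0:ℤ) ≤ C.deg L - (C.genus : ℤ) by linarith),
        mul_le_mul_of_nonneg_left (show (C.genus : ℤ) + 1 ≤ C.deg L - (C.genus : ℤ) by linarith)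
          (show (0:ℤ) ≤ (C.h0 P : ℤ) - 1 by linarith)]
  exact_mod_cast key
end

section
/- Let C be a curve of genus g, L globally generated, V ⊆ H^0(L) generating with codim_{H^0(L)} V = c < h^1(L) + g/(dim V − 2), and deg L ≤ Cliff(C) + 2(dim V − 1). Let S ⊂ M_{V,L} be a subbundle with μ(S) ≥ μ(M_{V,L}) and associated bundle F_S with det F_S = A satisfying h^1(A) ≤ 1. Then rank S > deg A − g. -/
set_option maxHeartbeats 1000000 in
/-- Lemma: let `L` be globally generated, `V ⊆ H⁰(L)` generating of dimension
`dimV` and codimension `c < h¹(L) + g/(dim V - 2)`, with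
`deg L ≤ Cliff(C) + 2(dim V - 1)`.  Let `S ⊂ M_{V,L}` be a subbundle of rank
`rankS ≤ dim V - 2` with `μ(S) ≥ μ(M_{V,L})` and associated bundle `F_S` with
`det F_S = A`, `deg S = -deg A`, satisfying `h¹(A) ≤ 1`.  Then
`rank S > deg A - g`. -/
theorem rank_gt_degA_sub_genus (C : CurveData) (L A : C.Pic)
    (dimV rankS c : ℕ)
    (hgg : C.bpf L) (hdimV : 3 ≤ dimV)
    (hcodim : (C.h0 L : ℤ) = (dimV : ℤ) + (c : ℤ))
    (hcbound : (c : ℚ) < (C.h1 L : ℚ) + (C.genus : ℚ) / ((dimV : ℚ) - 2))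
    (hdeg : C.deg L ≤ C.cliff + 2 * ((dimV : ℤ) - 1))
    (hrankS : 1 ≤ rankS) (hrankS' : rankS ≤ dimV - 2)
    (hA1 : C.h1 A ≤ 1)
    (hdestab : (-(C.deg L) : ℚ) / ((dimV : ℚ) - 1) ≤
        (-(C.deg A) : ℚ) / (rankS : ℚ)) :
    C.deg A - (C.genus : ℤ) < (rankS : ℤ) := by
  have hRR := C.riemannRoch L
  have hD : (3:ℚ) ≤ (dimV : ℚ) := by exact_mod_cast hdimV
  have hr : (1:ℚ) ≤ (rankS : ℚ) := by exact_mod_cast hrankS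
  have hrD : (rankS : ℚ) ≤ (dimV : ℚ) - 2 := by
    have h2 : 2 ≤ dimV := by omega
    have h3 : (rankS : ℚ) ≤ ((dimV - 2 : ℕ) : ℚ) := by exact_mod_cast hrankS'
    rwa [Nat.cast_sub h2] at h3
  have hg : (2:ℚ) ≤ (C.genus : ℚ) := by exact_mod_cast C.genus_ge
  have hg0 : (0:ℚ) ≤ (C.genus : ℚ) := by linarith
  have hL : (C.deg L : ℚ) = (dimV : ℚ) - 1 + (C.genus : ℚ) + (c : ℚ) - (C.h1 L : ℚ) := by
    have hz : (C.deg L : ℤ) = (dimV : ℤ) - 1 + (C.genus : ℤ) + (c : ℤ) - (C.h1 L : ℤ) := by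
      rw [hcodim] at hRR; linarith
    have := congrArg (fun t : ℤ => (t : ℚ)) hz
    push_cast at this
    linarith
  have hDpos : (0:ℚ) < (dimV : ℚ) - 1 := by linarith
  have hD2 : (0:ℚ) < (dimV : ℚ) - 2 := by linarith
  have hrpos : (0:ℚ) < (rankS : ℚ) := by linarith
  have hmul : (C.deg A : ℚ) * ((dimV : ℚ) - 1) ≤ (C.deg L : ℚ) * (rankS : ℚ) := by
    rw [div_le_div_iff₀ hDpos hrpos] at hdestab
    linarith
  have hcb : ((c : ℚ) - (C.h1 L : ℚ)) * ((dimV : ℚ) - 2) < (C.genus : ℚ) := by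
    have h1 : (c : ℚ) - (C.h1 L : ℚ) < (C.genus : ℚ) / ((dimV : ℚ) - 2) := by linarith
    rwa [lt_div_iff₀ hD2] at h1
  by_contra hcon
  push_neg at hcon
  have hcon' : (rankS : ℚ) + (C.genus : ℚ) ≤ (C.deg A : ℚ) := by
    have h : ((rankS : ℤ) : ℚ) ≤ ((C.deg A - (C.genus : ℤ) : ℤ) : ℚ) := by exact_mod_cast hcon
    push_cast at h
    linarith
  set x : ℚ := (c : ℚ) - (C.h1 L : ℚ) with hxdef
  have h1 : (C.genus : ℚ) * ((dimV : ℚ) - 1 - (rankS : ℚ)) ≤ (rankS : ℚ) * x := by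
    nlinarith [mul_le_mul_of_nonneg_right hcon' hDpos.le, hmul, hL]
  have hD1r : (1:ℚ) ≤ (dimV : ℚ) - 1 - (rankS : ℚ) := by linarith
  have h3 : (rankS : ℚ) * x * ((dimV : ℚ) - 2) < (C.genus : ℚ) * (rankS : ℚ) := by
    have := mul_lt_mul_of_pos_left hcb hrpos
    nlinarith [this]
  have h4 : (C.genus : ℚ) * ((dimV : ℚ) - 1 - (rankS : ℚ)) * ((dimV : ℚ) - 2) ≤
      (rankS : ℚ) * x * ((dimV : ℚ) - 2) := mul_le_mul_of_nonneg_right h1 hD2.le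
  have hD2r : (0:ℚ) ≤ (dimV : ℚ) - 2 - (rankS : ℚ) := by linarith
  nlinarith [h3, h4, mul_nonneg (mul_nonneg hg0 hD2.le) hD2r, mul_nonneg hg0 hD2r]
end
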